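/- arXiv:0803.1380 — 2 statements merged into one kernel-verified Lean document; each statement's English description precedes it below -/
import Mathlib

section
/- In characteristic 5, the elliptic curve y² = x(x-1)(x-μ) is supersingular if and only if μ² - μ + 1 = 0, equivalently iff the denominator polynomial D(u) = ((μ²-μ+1)(u² - μ²(μ+1)u) + μ⁶)² of the Verschiebung degenerates to the constant μ¹². -/
open Polynomial in
/-- In characteristic 5, the elliptic curve `y² = x(x-1)(x-μ)` is supersingular
(i.e. its Hasse invariant, the coefficient of `x⁴ = x^{p-1}` in `f(x)^{(p-1)/2}` with
`f = x(x-1)(x-μ)`, vanishes) if and only if `μ² - μ + 1 = 0`, equivalently iff the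
denominator `D(u) = ((μ²-μ+1)(u² - μ²(μ+1)u) + μ⁶)²` of the Verschiebung degenerates
to the constant `μ¹²`. -/
theorem supersingular_char5 (k : Type*) [Field k] [IsAlgClosed k] [CharP k 5]
    (μ : k) (h0 : μ ≠ 0) (h1 : μ ≠ 1) :
    let f : k[X] := X * (X - 1) * (X - C μ)
    let D : k[X] :=
      (C (μ ^ 2 - μ + 1) * (X ^ 2 - C (μ ^ 2 * (μ + 1)) * X) + C (μ ^ 6)) ^ 2
    ((f ^ 2).coeff 4 = 0 ↔ μ ^ 2 - μ + 1 = 0) ∧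
      (μ ^ 2 - μ + 1 = 0 ↔ D = C (μ ^ 12)) := by
  intro f D
  have h5 : (5 : k) = 0 := by exact_mod_cast CharP.cast_eq_zero k 5
  have hf : f ^ 2 = X ^ 6 - C (2 + 2*μ) * X ^ 5 + C (μ^2 + 4*μ + 1) * X ^ 4
      - C (2*μ^2 + 2*μ) * X ^ 3 + C (μ^2) * X ^ 2 := by
    simp only [f, map_add, map_sub, map_mul, map_pow, map_one, map_ofNat]
    ring
  have hc : (f ^ 2).coeff 4 = μ^2 + 4*μ + 1 := by
    rw [hf]
    simp only [coeff_add, coeff_sub, coeff_C_mul, coeff_X_pow, coeff_C]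
    norm_num
  constructor
  · rw [hc]
    constructor
    · intro h; linear_combination h - μ * h5
    · intro h; linear_combination h + μ * h5
  · constructor
    · intro h
      show D = _
      simp only [D, h, map_zero, zero_mul, zero_add, ← C_pow, ← pow_mul]
    · intro hD
      have h4 : D.coeff 4 = (μ^2-μ+1)^2 := by
        have hDe : D = C ((μ^2-μ+1)^2) * X^4
            - C (2*(μ^2-μ+1)^2*(μ^2*(μ+1))) * X^3
            + C ((μ^2-μ+1)^2*(μ^2*(μ+1))^2 + 2*(μ^2-μ+1)*μ^6) * X^2
            - C (2*(μ^2-μ+1)*(μ^2*(μ+1))*μ^6) * X + C (μ^12) := by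
          simp only [D, map_add, map_sub, map_mul, map_pow, map_one, map_ofNat]
          ring
        rw [hDe]
        simp only [coeff_add, coeff_sub, coeff_C_mul, coeff_X_pow, coeff_C, coeff_X]
        norm_num
      rw [hD] at h4
      rw [coeff_C] at h4
      norm_num at h4
      have h2 : (μ^2-μ+1)^2 = 0 := h4.symm
      exact pow_eq_zero_iff (by norm_num) |>.mp h2
end

section
/- Let k be a field of characteristic ≠ 2 and suppose k₀₀,k₀₁,k₁₀,k₁₁ ∈ k satisfy the cubic relation 4 + k₀₁k₁₀k₁₁ - k₀₁² - k₁₀² - k₁₁² + k₀₀² = 0 together with the inequations: k₀₁,k₁₀,k₁₁ ∉ {2,-2} and all eight expressions ±k₀₀ + ε₁k₀₁ + ε₂k₁₀ + ε₃k₁₁ - 2ε₁ε₂ε₃ (with εᵢ = ±1 and ε₁ε₂ε₃ = 1 pattern as in (5.4)) are nonzero. Then each of the sixteen quantities ω(τ) in the table (6.1) — e.g. ω = 2(k₀₀+k₁₀+k₁₁)/(2+k₀₁) — is a well-defined element of k and satisfies ω ≠ ±2. -/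
private lemma omega_aux {k : Type*} [Field k] (h2 : (2 : k) ≠ 0) {n d : k}
    (hd : d ≠ 0) (h1 : n - d ≠ 0) (h2' : n + d ≠ 0) :
    2 * n / d ≠ 2 ∧ 2 * n / d ≠ -2 := by
  constructor
  · intro h
    rw [div_eq_iff hd] at h
    exact h1 (by apply mul_left_cancel₀ h2; linear_combination h)
  · intro h
    rw [div_eq_iff hd] at h
    exact h2' (by apply mul_left_cancel₀ h2; linear_combination h)

/-- Under the cubic relation (5.2) and the inequations (5.4) on the coefficients of a
Kummer quartic, each of the quantities `ω(τ)` of table (6.1) is a well-defined element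
of `k` (the denominators are nonzero) and satisfies `ω(τ) ≠ ±2`. -/
theorem omega_table_well_defined (k : Type*) [Field k] (h2 : (2 : k) ≠ 0)
    (k00 k01 k10 k11 : k)
    (hrel : 4 + k01 * k10 * k11 - k01 ^ 2 - k10 ^ 2 - k11 ^ 2 + k00 ^ 2 = 0)
    (h01p : k01 ≠ 2) (h01m : k01 ≠ -2)
    (h10p : k10 ≠ 2) (h10m : k10 ≠ -2)
    (h11p : k11 ≠ 2) (h11m : k11 ≠ -2)
    (hA1 : k01 + k10 + k11 + 2 + k00 ≠ 0) (hA2 : k01 + k10 + k11 + 2 - k00 ≠ 0)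
    (hB1 : k01 + k10 - k11 - 2 + k00 ≠ 0) (hB2 : k01 + k10 - k11 - 2 - k00 ≠ 0)
    (hC1 : k01 - k10 + k11 - 2 + k00 ≠ 0) (hC2 : k01 - k10 + k11 - 2 - k00 ≠ 0)
    (hD1 : -k01 + k10 + k11 - 2 + k00 ≠ 0) (hD2 : -k01 + k10 + k11 - 2 - k00 ≠ 0) :
    let ok : k → Prop := fun w => w ≠ 2 ∧ w ≠ -2
    -- denominators are nonzero, so the table entries are well defined
    (2 + k01 ≠ 0 ∧ 2 - k01 ≠ 0 ∧ 2 + k10 ≠ 0 ∧ 2 - k10 ≠ 0 ∧ 2 + k11 ≠ 0 ∧ 2 - k11 ≠ 0)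
    -- row α₀ = 00
    ∧ ok k10 ∧ ok k01 ∧ ok k11
    -- row α₀ = 01
    ∧ ok (2 * (k00 + k10 + k11) / (2 + k01))
    ∧ ok (2 * (-k00 + k10 - k11) / (2 - k01))
    ∧ ok (2 * (-k00 + k10 + k11) / (2 + k01))
    ∧ ok (2 * (k00 + k10 - k11) / (2 - k01))
    -- row α₀ = 10
    ∧ ok (2 * (k00 + k01 + k11) / (2 + k10))
    ∧ ok (2 * (-k00 + k01 + k11) / (2 + k10))
    ∧ ok (2 * (-k00 + k01 - k11) / (2 - k10))
    ∧ ok (2 * (k00 + k01 - k11) / (2 - k10))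
    -- row α₀ = 11
    ∧ ok (2 * (k00 + k01 + k10) / (2 + k11))
    ∧ ok (2 * (k00 + k01 - k10) / (2 - k11))
    ∧ ok (2 * (-k00 + k01 - k10) / (2 - k11))
    ∧ ok (2 * (-k00 + k01 + k10) / (2 + k11)) := by
  intro ok
  have d01p : 2 + k01 ≠ 0 := fun h => h01m (by linear_combination h)
  have d01m : 2 - k01 ≠ 0 := fun h => h01p (by linear_combination -h)
  have d10p : 2 + k10 ≠ 0 := fun h => h10m (by linear_combination h)
  have d10m : 2 - k10 ≠ 0 := fun h => h10p (by linear_combination -h)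
  have d11p : 2 + k11 ≠ 0 := fun h => h11m (by linear_combination h)
  have d11m : 2 - k11 ≠ 0 := fun h => h11p (by linear_combination -h)
  refine ⟨⟨d01p, d01m, d10p, d10m, d11p, d11m⟩, ⟨h10p, h10m⟩, ⟨h01p, h01m⟩, ⟨h11p, h11m⟩,
    omega_aux h2 d01p (fun h => hD1 (by linear_combination h)) (fun h => hA1 (by linear_combination h)),
    omega_aux h2 d01m (fun h => hB2 (by linear_combination h)) (fun h => hC1 (by linear_combination -h)),
    omega_aux h2 d01p (fun h => hD2 (by linear_combination h)) (fun h => hA2 (by linear_combination h)),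
    omega_aux h2 d01m (fun h => hB1 (by linear_combination h)) (fun h => hC2 (by linear_combination -h)),
    omega_aux h2 d10p (fun h => hC1 (by linear_combination h)) (fun h => hA1 (by linear_combination h)),
    omega_aux h2 d10p (fun h => hC2 (by linear_combination h)) (fun h => hA2 (by linear_combination h)),
    omega_aux h2 d10m (fun h => hB2 (by linear_combination h)) (fun h => hD1 (by linear_combination -h)),
    omega_aux h2 d10m (fun h => hB1 (by linear_combination h)) (fun h => hD2 (by linear_combination -h)),
    omega_aux h2 d11p (fun h => hB1 (by linear_combination h)) (fun h => hA1 (by linear_combination h)),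
    omega_aux h2 d11m (fun h => hC1 (by linear_combination h)) (fun h => hD2 (by linear_combination -h)),
    omega_aux h2 d11m (fun h => hC2 (by linear_combination h)) (fun h => hD1 (by linear_combination -h)),
    omega_aux h2 d11p (fun h => hB2 (by linear_combination h)) (fun h => hA2 (by linear_combination h))⟩
end
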